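/- If a fair finite multiset of n ≥ 6 triples is irreducible (i.e., deleting any one triple from it yields a multiset that is not fair), then there exist three distinct elements that each appear in exactly n−2 of the triples. -/

import Mathlib

/-!
Deleting a triple `t` can only break fairness at an element `i ∉ t` that was absent from
exactly two triples; such a *tight* element lies in `n - 2` triples. Two tight elements
therefore share a triple as soon as `n ≥ 5`. Deleting a triple containing a tight `a`
yields a tight `b ≠ a`, and deleting a triple containing both yields a third tight `c`.
-/

/-- `T` is *`c`-fair*: every element appearing in some tuple of `T` is absent from at
least `c` of the tuples (counted with multiplicity). -/
def CFair (c : ℕ) (T : Multiset (Finset ℕ+)) : Prop :=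
  ∀ i : ℕ+, (∃ t ∈ T, i ∈ t) →
    c ≤ Multiset.card (T.filter (fun t => i ∉ t))

namespace Multiset

variable {α : Type*} (s : Multiset α) (p q : α → Prop) [DecidablePred p] [DecidablePred q]

theorem card_filter_add_card_filter_not :
    card (s.filter p) + card (s.filter (fun a => ¬ p a)) = card s := by
  rw [← card_add, filter_add_not]

theorem exists_mem_of_card_filter_not_lt (h : card (s.filter (fun a => ¬ p a)) < card s) :
    ∃ a ∈ s, p a := by
  have := s.card_filter_add_card_filter_not p
  obtain ⟨a, ha⟩ := card_pos_iff_exists_mem.mp (by omega : 0 < card (s.filter p))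
  exact ⟨a, mem_of_mem_filter ha, of_mem_filter ha⟩

theorem card_le_card_filter_not_add_of_forall_not_and (hpq : ∀ a ∈ s, ¬ (p a ∧ q a)) :
    card s ≤ card (s.filter (fun a => ¬ p a)) + card (s.filter (fun a => ¬ q a)) := by
  induction s using Multiset.induction_on with
  | empty => simp
  | cons a s ih =>
    have ha := hpq a (mem_cons_self a s)
    have := ih fun b hb => hpq b (mem_cons_of_mem hb)
    by_cases hp : p a <;> by_cases hq : q a <;> simp_all <;> omega

theorem exists_mem_and_of_card_filter_not_add_lt
    (h : card (s.filter (fun a => ¬ p a)) + card (s.filter (fun a => ¬ q a)) < card s) :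
    ∃ a ∈ s, p a ∧ q a := by
  by_contra! hpq
  exact h.not_ge <| s.card_le_card_filter_not_add_of_forall_not_and p q
    fun a ha hpqa => hpq a ha hpqa.1 hpqa.2

end Multiset

theorem CFair.exists_not_mem_card_filter_not_mem_eq {c : ℕ} {T : Multiset (Finset ℕ+)}
    {t : Finset ℕ+} (hfair : CFair c T) (ht : t ∈ T) (herase : ¬ CFair c (T.erase t)) :
    ∃ i ∉ t, Multiset.card (T.filter (fun s => i ∉ s)) = c := by
  simp only [CFair, not_forall, not_le] at herase
  obtain ⟨i, ⟨s, hs, his⟩, hlt⟩ := herase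
  have hge := hfair i ⟨s, Multiset.mem_of_mem_erase hs, his⟩
  rw [← Multiset.cons_erase ht, Multiset.filter_cons] at hge
  by_cases hit : i ∈ t
  · simp only [hit, not_true_eq_false, if_false, zero_add] at hge
    omega
  · refine ⟨i, hit, ?_⟩
    rw [← Multiset.cons_erase ht, Multiset.filter_cons]
    simp only [hit, not_false_eq_true, if_true, Multiset.card_add,
      Multiset.card_singleton] at hge ⊢
    omega

theorem irreducible_has_three_tight_elements
    (T : Multiset (Finset ℕ+))
    (hn : 6 ≤ Multiset.card T)
    (hfair : CFair 2 T)
    (hirr : ∀ t ∈ T, ¬ CFair 2 (T.erase t)) :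
    ∃ a b c : ℕ+, a ≠ b ∧ a ≠ c ∧ b ≠ c ∧
      Multiset.card (T.filter (fun s => a ∈ s)) = Multiset.card T - 2 ∧
      Multiset.card (T.filter (fun s => b ∈ s)) = Multiset.card T - 2 ∧
      Multiset.card (T.filter (fun s => c ∈ s)) = Multiset.card T - 2 := by
  have card_mem {i : ℕ+} (hi : Multiset.card (T.filter (fun s => i ∉ s)) = 2) :
      Multiset.card (T.filter (fun s => i ∈ s)) = Multiset.card T - 2 := by
    have := T.card_filter_add_card_filter_not (fun s => i ∈ s)
    omega
  obtain ⟨t₀, ht₀⟩ := Multiset.card_pos_iff_exists_mem.mp (by omega : 0 < Multiset.card T)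
  obtain ⟨a, -, ha⟩ := hfair.exists_not_mem_card_filter_not_mem_eq ht₀ (hirr t₀ ht₀)
  obtain ⟨t₁, ht₁, hat₁⟩ := T.exists_mem_of_card_filter_not_lt (fun s => a ∈ s) (by omega)
  obtain ⟨b, hbt₁, hb⟩ := hfair.exists_not_mem_card_filter_not_mem_eq ht₁ (hirr t₁ ht₁)
  obtain ⟨t₂, ht₂, hat₂, hbt₂⟩ :=
    T.exists_mem_and_of_card_filter_not_add_lt (fun s => a ∈ s) (fun s => b ∈ s) (by omega)
  obtain ⟨c, hct₂, hc⟩ := hfair.exists_not_mem_card_filter_not_mem_eq ht₂ (hirr t₂ ht₂)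
  exact ⟨a, b, c, ne_of_mem_of_not_mem hat₁ hbt₁, ne_of_mem_of_not_mem hat₂ hct₂,
    ne_of_mem_of_not_mem hbt₂ hct₂, card_mem ha, card_mem hb, card_mem hc⟩
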